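/- Let p > 1, let N ≥ 2 be an integer, let α ∈ ℝ and let ω > α²/N². Define φ : [0,∞) → ℝ by φ(x) = (((p+1)ω/2)·sech²(((p−1)√ω/2)·x − arctanh(α/(N√ω))))^{1/(p−1)}. Then the virial identity holds: N·(∫₀^∞ φ'(x)² dx − ((p−1)/(2(p+1)))·∫₀^∞ φ(x)^{p+1} dx) + (α/2)·φ(0)² = 0. -/

import Mathlib

open MeasureTheory Real Set Filter Topology

/-- Inverse hyperbolic tangent. -/
noncomputable def arctanh (x : ℝ) : ℝ := Real.log ((1 + x) / (1 - x)) / 2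

/-! With `u = (p - 1)√ω x / 2 - b`, the profile satisfies `φ' = -√ω tanh u · φ` and
`φ ^ (p - 1) = ((p + 1) ω / 2) sech² u`, so `G = -(√ω / 2) φ² tanh u` is a primitive of the virial
integrand `φ'² - ((p - 1) / (2 (p + 1))) φ ^ (p + 1)`. As `φ` decays like `exp (-√ω x)`, the
half-line integral is `-G 0 = -(√ω / 2) φ(0)² tanh b`, and for the ground state
`tanh b = α / (N √ω)`, which cancels the boundary term `(α / 2) φ(0)²`. -/

theorem arctanh_eq_artanh {y : ℝ} (hy : y ∈ Icc (-1) 1) : arctanh y = artanh y := by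
  rw [artanh_eq_half_log hy, arctanh]
  ring

theorem tanh_arctanh {y : ℝ} (hy : y ∈ Ioo (-1) 1) : tanh (arctanh y) = y := by
  rw [arctanh_eq_artanh (Ioo_subset_Icc_self hy), Real.tanh_artanh hy]

theorem Real.hasDerivAt_tanh (x : ℝ) : HasDerivAt tanh (1 / cosh x ^ 2) x := by
  rw [show tanh = sinh / cosh from funext tanh_eq_sinh_div_cosh]
  refine ((hasDerivAt_sinh x).div (hasDerivAt_cosh x) (cosh_pos x).ne').congr_deriv ?_
  rw [← sq, ← sq, cosh_sq, add_sub_cancel_left]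

theorem hasDerivAt_one_div_cosh_sq (t : ℝ) :
    HasDerivAt (fun t => (1 / cosh t) ^ 2) (-2 * tanh t * (1 / cosh t) ^ 2) t := by
  rw [show (fun t => (1 / cosh t) ^ 2) = cosh⁻¹ ^ 2 by ext; simp]
  refine (((hasDerivAt_cosh t).inv (cosh_pos t).ne').pow 2).congr_deriv ?_
  have := (cosh_pos t).ne'
  simp only [Pi.inv_apply, tanh_eq_sinh_div_cosh]
  norm_num
  field_simp

theorem one_div_cosh_le_two_mul_exp_neg (t : ℝ) : 1 / cosh t ≤ 2 * exp (-t) := by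
  rw [div_le_iff₀ (cosh_pos t), cosh_eq]
  have : exp (-t) * exp t = 1 := by rw [← exp_add, neg_add_cancel, exp_zero]
  nlinarith [exp_pos (-t)]

theorem hasDerivAt_mul_sub_const (a b x : ℝ) : HasDerivAt (fun x => a * x - b) a x := by
  simpa using ((hasDerivAt_id x).const_mul a).sub_const b

noncomputable def nlsProfile (p ω b x : ℝ) : ℝ :=
  ((p + 1) * ω / 2 * (1 / cosh ((p - 1) * √ω / 2 * x - b)) ^ 2) ^ (1 / (p - 1))

noncomputable def virialPrimitive (p ω b x : ℝ) : ℝ :=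
  -(√ω / 2) * nlsProfile p ω b x ^ 2 * tanh ((p - 1) * √ω / 2 * x - b)

section NLSProfile

variable {p ω : ℝ}

theorem nlsProfile_pos (hp : 1 < p) (hω : 0 < ω) (b x : ℝ) : 0 < nlsProfile p ω b x := by
  unfold nlsProfile
  positivity

theorem nlsProfile_rpow_sub_one (hp : 1 < p) (hω : 0 < ω) (b x : ℝ) :
    nlsProfile p ω b x ^ (p - 1)
      = (p + 1) * ω / 2 * (1 / cosh ((p - 1) * √ω / 2 * x - b)) ^ 2 := by
  rw [nlsProfile, ← rpow_mul (by positivity), one_div_mul_cancel (sub_pos.2 hp).ne', rpow_one]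

theorem hasDerivAt_nlsProfile (hp : 1 < p) (hω : 0 < ω) (b x : ℝ) :
    HasDerivAt (nlsProfile p ω b)
      (-√ω * tanh ((p - 1) * √ω / 2 * x - b) * nlsProfile p ω b x) x := by
  have hphase := hasDerivAt_mul_sub_const ((p - 1) * √ω / 2) b x
  have hbase := ((hasDerivAt_one_div_cosh_sq _).comp x hphase).const_mul ((p + 1) * ω / 2)
  have hpos : 0 < (p + 1) * ω / 2 * (1 / cosh ((p - 1) * √ω / 2 * x - b)) ^ 2 := by
    rw [← nlsProfile_rpow_sub_one hp hω]
    exact rpow_pos_of_pos (nlsProfile_pos hp hω b x) _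
  refine (hbase.rpow_const (p := 1 / (p - 1)) (Or.inl hpos.ne')).congr_deriv ?_
  rw [Function.comp_apply, rpow_sub_one hpos.ne', nlsProfile]
  have := (sub_pos.2 hp).ne'
  field_simp

theorem continuous_nlsProfile (hp : 1 < p) (hω : 0 < ω) (b : ℝ) :
    Continuous (nlsProfile p ω b) :=
  continuous_iff_continuousAt.2 fun x => (hasDerivAt_nlsProfile hp hω b x).continuousAt

theorem nlsProfile_le (hp : 1 < p) (hω : 0 < ω) (b x : ℝ) :
    nlsProfile p ω b x ≤ (2 * (p + 1) * ω * exp (2 * b)) ^ (1 / (p - 1)) * exp (-√ω * x) := by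
  have hexp : (2 * exp (-((p - 1) * √ω / 2 * x - b))) ^ 2
      = 4 * exp (2 * b) * exp (-√ω * x) ^ (p - 1) := by
    rw [← exp_mul, mul_pow, ← exp_nat_mul, mul_assoc, ← exp_add]
    ring_nf
  calc nlsProfile p ω b x
      ≤ ((p + 1) * ω / 2 * (2 * exp (-((p - 1) * √ω / 2 * x - b))) ^ 2) ^ (1 / (p - 1)) := by
        unfold nlsProfile
        gcongr
        exact one_div_cosh_le_two_mul_exp_neg _
    _ = (2 * (p + 1) * ω * exp (2 * b)) ^ (1 / (p - 1)) * exp (-√ω * x) := by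
        rw [hexp, show (p + 1) * ω / 2 * (4 * exp (2 * b) * exp (-√ω * x) ^ (p - 1))
          = 2 * (p + 1) * ω * exp (2 * b) * exp (-√ω * x) ^ (p - 1) by ring,
          mul_rpow (by positivity) (by positivity), ← rpow_mul (exp_pos _).le,
          mul_one_div_cancel (sub_pos.2 hp).ne', rpow_one]

theorem isBigO_nlsProfile (hp : 1 < p) (hω : 0 < ω) (b : ℝ) :
    nlsProfile p ω b =O[atTop] fun x => exp (-√ω * x) :=
  .of_bound _ <| .of_forall fun x => by
    rw [norm_of_nonneg (nlsProfile_pos hp hω b x).le, norm_of_nonneg (exp_pos _).le]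
    exact nlsProfile_le hp hω b x

theorem tendsto_nlsProfile_atTop (hp : 1 < p) (hω : 0 < ω) (b : ℝ) :
    Tendsto (nlsProfile p ω b) atTop (𝓝 0) :=
  (isBigO_nlsProfile hp hω b).trans_tendsto <| tendsto_exp_atBot.comp <|
    tendsto_id.const_mul_atTop_of_neg (neg_lt_zero.2 (sqrt_pos.2 hω))

theorem integrableOn_nlsProfile_rpow (hp : 1 < p) (hω : 0 < ω) (b : ℝ) {r : ℝ} (hr : 0 < r) :
    IntegrableOn (fun x => nlsProfile p ω b x ^ r) (Ioi 0) := by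
  refine integrable_of_isBigO_exp_neg (mul_pos hr (sqrt_pos.2 hω))
    ((continuous_nlsProfile hp hω b).rpow_const fun x =>
      Or.inl (nlsProfile_pos hp hω b x).ne').continuousOn ?_
  refine ((isBigO_nlsProfile hp hω b).rpow hr.le
    (.of_forall fun x => (exp_pos _).le)).congr_right fun x => ?_
  rw [← exp_mul]
  ring_nf

theorem integrableOn_deriv_nlsProfile_sq (hp : 1 < p) (hω : 0 < ω) (b : ℝ) :
    IntegrableOn (fun x => deriv (nlsProfile p ω b) x ^ 2) (Ioi 0) := by
  refine ((integrableOn_nlsProfile_rpow hp hω b two_pos).const_mul ω).mono'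
    ((measurable_deriv _).pow_const 2).aestronglyMeasurable (ae_of_all _ fun x => ?_)
  rw [(hasDerivAt_nlsProfile hp hω b x).deriv, norm_of_nonneg (sq_nonneg _), rpow_two,
    mul_pow, mul_pow, neg_sq, sq_sqrt hω.le]
  have := tanh_sq_lt_one ((p - 1) * √ω / 2 * x - b)
  gcongr
  nlinarith

theorem hasDerivAt_virialPrimitive (hp : 1 < p) (hω : 0 < ω) (b x : ℝ) :
    HasDerivAt (virialPrimitive p ω b)
      (deriv (nlsProfile p ω b) x ^ 2 - (p - 1) / (2 * (p + 1)) * nlsProfile p ω b x ^ (p + 1))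
      x := by
  have hφ := hasDerivAt_nlsProfile hp hω b x
  have hphase := hasDerivAt_mul_sub_const ((p - 1) * √ω / 2) b x
  have hG := ((hφ.pow 2).const_mul (-(√ω / 2))).mul ((Real.hasDerivAt_tanh _).comp x hphase)
  have hpow : nlsProfile p ω b x ^ (p + 1)
      = nlsProfile p ω b x ^ 2 * nlsProfile p ω b x ^ (p - 1) := by
    rw [← rpow_two, ← rpow_add (nlsProfile_pos hp hω b x)]
    ring_nf
  refine hG.congr_deriv ?_
  simp only [Function.comp_apply, Pi.pow_apply]
  rw [hφ.deriv, hpow, nlsProfile_rpow_sub_one hp hω]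
  field_simp
  linear_combination (-(p - 1) * nlsProfile p ω b x ^ 2) * sq_sqrt hω.le

theorem tendsto_virialPrimitive_atTop (hp : 1 < p) (hω : 0 < ω) (b : ℝ) :
    Tendsto (virialPrimitive p ω b) atTop (𝓝 0) := by
  have hlim := ((tendsto_nlsProfile_atTop hp hω b).pow 2).const_mul (√ω / 2)
  rw [zero_pow two_ne_zero, mul_zero] at hlim
  refine squeeze_zero_norm (fun x => ?_) hlim
  rw [virialPrimitive, norm_mul, norm_mul, norm_neg, norm_of_nonneg (by positivity : 0 ≤ √ω / 2),
    norm_of_nonneg (sq_nonneg _)]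
  exact mul_le_of_le_one_right (by positivity) (abs_tanh_lt_one _).le

theorem integral_virial_nlsProfile (hp : 1 < p) (hω : 0 < ω) (b : ℝ) :
    (∫ x in Ioi 0, deriv (nlsProfile p ω b) x ^ 2)
        - (p - 1) / (2 * (p + 1)) * ∫ x in Ioi 0, nlsProfile p ω b x ^ (p + 1)
      = -(√ω / 2) * nlsProfile p ω b 0 ^ 2 * tanh b := by
  have hkin := integrableOn_deriv_nlsProfile_sq hp hω b
  have hpot := (integrableOn_nlsProfile_rpow hp hω b (by linarith : 0 < p + 1)).const_mul
    ((p - 1) / (2 * (p + 1)))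
  rw [← integral_const_mul, ← integral_sub hkin hpot,
    integral_Ioi_of_hasDerivAt_of_tendsto' (fun x _ => hasDerivAt_virialPrimitive hp hω b x)
      (hkin.sub hpot) (tendsto_virialPrimitive_atTop hp hω b)]
  simp [virialPrimitive, tanh_neg]

end NLSProfile

/-- The ground-state profile of the NLS-δ equation on a star graph with `N` edges
satisfies the virial identity `N·(∫φ'² − ((p−1)/(2(p+1)))∫φ^{p+1}) + (α/2)·φ(0)² = 0`. -/
theorem ground_state_virial_identity (p : ℝ) (hp : 1 < p) (N : ℕ) (hN : 2 ≤ N)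
    (α ω : ℝ) (hω : α ^ 2 / (N : ℝ) ^ 2 < ω)
    (φ : ℝ → ℝ)
    (hφ : φ = fun x : ℝ => ((p + 1) * ω / 2 *
      (1 / Real.cosh ((p - 1) * Real.sqrt ω / 2 * x
        - arctanh (α / ((N : ℝ) * Real.sqrt ω)))) ^ 2) ^ (1 / (p - 1))) :
    (N : ℝ) * ((∫ x in Set.Ioi (0 : ℝ), (deriv φ x) ^ 2)
        - (p - 1) / (2 * (p + 1)) * (∫ x in Set.Ioi (0 : ℝ), φ x ^ (p + 1)))
      + α / 2 * (φ 0) ^ 2 = 0 := by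
  have hN0 : (0 : ℝ) < N := by exact_mod_cast (by omega : 0 < N)
  have hω0 : 0 < ω := (div_nonneg (sq_nonneg α) (sq_nonneg _)).trans_lt hω
  have hy : α / (N * √ω) ∈ Ioo (-1) 1 := by
    rw [mem_Ioo, ← abs_lt, ← sq_lt_one_iff_abs_lt_one, div_pow, mul_pow, sq_sqrt hω0.le,
      div_lt_one (by positivity)]
    rwa [div_lt_iff₀ (by positivity), mul_comm] at hω
  change φ = nlsProfile p ω (arctanh (α / (N * √ω))) at hφ
  rw [hφ, integral_virial_nlsProfile hp hω0, tanh_arctanh hy]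
  field_simp
  ring
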